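/- arXiv:1606.07531 — 5 statements merged into one kernel-verified Lean document; each statement's English description precedes it below -/
import Mathlib

section
/- Let f̃, g̃ ∈ ℝ^{n+1} be written as f̃ = (f_{[n]}, f_{n+1}) and g̃ = (g_{[n]}, g_{n+1}) with f_{[n]}, g_{[n]} ∈ ℝ^n and f_{n+1} ≠ 0, g_{n+1} ≠ 0. Then ‖f_{[n]}/f_{n+1} − g_{[n]}/g_{n+1}‖₂ ≤ (‖f̃‖₂ ‖g̃‖₂ / (|f_{n+1}| |g_{n+1}|)) · ‖f̃/‖f̃‖₂ − g̃/‖g̃‖₂‖₂. -/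
noncomputable def norm2 {ι : Type*} [Fintype ι] (x : ι → ℝ) : ℝ :=
  Real.sqrt (∑ i, x i ^ 2)

/-!
Put `x = f̃/‖f̃‖`, `y = g̃/‖g̃‖` and let `e` be the last basis vector, `s = ⟪y, e⟫`, `t = ⟪x, e⟫`.
Clearing denominators, the claim becomes `‖s • x - t • y‖ ≤ ‖x - y‖` for unit vectors `x, y, e`
(the vector on the left has last coordinate `0`). With `c = ⟪x, y⟫`, the difference of the squares
is `2 - 2c - s² - t² + 2stc = (1 - c)² + det (Gram x y e)`, and the Gram determinant is `≥ 0` by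
Cauchy–Schwarz applied to `x - t • e` and `y - s • e`.
-/

section InnerProductSpace

variable {E : Type*} [NormedAddCommGroup E] [InnerProductSpace ℝ E]

open RealInnerProductSpace

theorem norm_inner_smul_sub_inner_smul_le_of_norm_eq_one {x y e : E}
    (hx : ‖x‖ = 1) (hy : ‖y‖ = 1) (he : ‖e‖ = 1) :
    ‖⟪y, e⟫ • x - ⟪x, e⟫ • y‖ ≤ ‖x - y‖ := by
  have hgram : (⟪x, y⟫ - ⟪y, e⟫ * ⟪x, e⟫) ^ 2 ≤ (1 - ⟪x, e⟫ ^ 2) * (1 - ⟪y, e⟫ ^ 2) := by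
    have h := real_inner_mul_inner_self_le (x - ⟪x, e⟫ • e) (y - ⟪y, e⟫ • e)
    simp only [inner_sub_left, inner_sub_right, real_inner_smul_left, real_inner_smul_right,
      real_inner_self_eq_norm_sq, norm_smul, mul_pow, Real.norm_eq_abs, sq_abs, hx, hy, he,
      real_inner_comm x e, real_inner_comm y e] at h
    linarith [h]
  have hlhs : ‖⟪y, e⟫ • x - ⟪x, e⟫ • y‖ ^ 2
      = ⟪y, e⟫ ^ 2 - 2 * ⟪y, e⟫ * ⟪x, e⟫ * ⟪x, y⟫ + ⟪x, e⟫ ^ 2 := by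
    rw [norm_sub_sq_real, norm_smul, norm_smul, real_inner_smul_left, real_inner_smul_right, hx,
      hy, Real.norm_eq_abs, Real.norm_eq_abs, mul_one, mul_one, sq_abs, sq_abs]
    ring
  have hrhs : ‖x - y‖ ^ 2 = 2 - 2 * ⟪x, y⟫ := by
    rw [norm_sub_sq_real, hx, hy]; ring
  rw [← pow_le_pow_iff_left₀ (norm_nonneg _) (norm_nonneg _) two_ne_zero, hlhs, hrhs]
  nlinarith [hgram, sq_nonneg (1 - ⟪x, y⟫)]

theorem norm_inner_smul_sub_inner_smul_le {F G e : E} (hF : F ≠ 0) (hG : G ≠ 0) (he : ‖e‖ = 1) :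
    ‖⟪G, e⟫ • F - ⟪F, e⟫ • G‖ ≤ ‖F‖ * ‖G‖ * ‖‖F‖⁻¹ • F - ‖G‖⁻¹ • G‖ := by
  have hFpos : 0 < ‖F‖ := norm_pos_iff.mpr hF
  have hGpos : 0 < ‖G‖ := norm_pos_iff.mpr hG
  have hFunit : ‖‖F‖⁻¹ • F‖ = 1 := by
    rw [norm_smul, norm_inv, norm_norm, inv_mul_cancel₀ hFpos.ne']
  have hGunit : ‖‖G‖⁻¹ • G‖ = 1 := by
    rw [norm_smul, norm_inv, norm_norm, inv_mul_cancel₀ hGpos.ne']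
  have hrescale : ⟪‖G‖⁻¹ • G, e⟫ • ‖F‖⁻¹ • F - ⟪‖F‖⁻¹ • F, e⟫ • ‖G‖⁻¹ • G
      = (‖F‖ * ‖G‖)⁻¹ • (⟪G, e⟫ • F - ⟪F, e⟫ • G) := by
    simp only [real_inner_smul_left, smul_sub, smul_smul, mul_inv]
    congr 1 <;> congr 1 <;> ring
  have key := norm_inner_smul_sub_inner_smul_le_of_norm_eq_one hFunit hGunit he
  rwa [hrescale, norm_smul, Real.norm_eq_abs, abs_of_pos (by positivity),
    inv_mul_le_iff₀ (by positivity)] at key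

theorem norm_inv_inner_smul_sub_inv_inner_smul_le {F G e : E} (hFe : ⟪F, e⟫ ≠ 0)
    (hGe : ⟪G, e⟫ ≠ 0) (he : ‖e‖ = 1) :
    ‖⟪F, e⟫⁻¹ • F - ⟪G, e⟫⁻¹ • G‖ ≤
      ‖F‖ * ‖G‖ / (|⟪F, e⟫| * |⟪G, e⟫|) * ‖‖F‖⁻¹ • F - ‖G‖⁻¹ • G‖ := by
  have hF : F ≠ 0 := by rintro rfl; simp at hFe
  have hG : G ≠ 0 := by rintro rfl; simp at hGe
  have hdehom : ⟪F, e⟫⁻¹ • F - ⟪G, e⟫⁻¹ • G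
      = (⟪F, e⟫ * ⟪G, e⟫)⁻¹ • (⟪G, e⟫ • F - ⟪F, e⟫ • G) := by
    simp only [smul_sub, smul_smul, mul_inv]
    congr 1 <;> congr 1 <;> field_simp
  rw [hdehom, norm_smul, Real.norm_eq_abs, abs_inv, abs_mul, div_mul_eq_mul_div, inv_mul_eq_div]
  gcongr
  exact norm_inner_smul_sub_inner_smul_le hF hG he

end InnerProductSpace

theorem norm2_eq_norm_toLp {ι : Type*} [Fintype ι] (x : ι → ℝ) :
    norm2 x = ‖WithLp.toLp 2 x‖ := by
  simp [norm2, EuclideanSpace.norm_eq]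

theorem norm2_div_sub_div {ι : Type*} [Fintype ι] (x y : ι → ℝ) (a b : ℝ) :
    norm2 (fun i => x i / a - y i / b) = ‖a⁻¹ • WithLp.toLp 2 x - b⁻¹ • WithLp.toLp 2 y‖ := by
  rw [norm2_eq_norm_toLp]
  congr 1
  ext i
  simp [div_eq_inv_mul]

theorem norm2_eq_norm2_comp_castSucc {n : ℕ} {x : Fin (n + 1) → ℝ} (hx : x (Fin.last n) = 0) :
    norm2 x = norm2 (x ∘ Fin.castSucc) := by
  rw [norm2, norm2, Fin.sum_univ_castSucc, hx]
  simp

theorem inner_toLp_snoc_single_last {n : ℕ} (f : Fin n → ℝ) (c : ℝ) :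
    inner ℝ (WithLp.toLp 2 (Fin.snoc f c : Fin (n + 1) → ℝ))
      (EuclideanSpace.single (Fin.last n) 1) = c := by
  simp [EuclideanSpace.inner_single_right]

/-- Lemma (norm comparison after dehomogenization): for f̃ = (f, fc), g̃ = (g, gc)
with nonzero last coordinates,
‖f/fc − g/gc‖₂ ≤ (‖f̃‖₂‖g̃‖₂/(|fc||gc|)) ‖f̃/‖f̃‖₂ − g̃/‖g̃‖₂‖₂. -/
theorem stmt0 (n : ℕ) (f g : Fin n → ℝ) (fc gc : ℝ) (hfc : fc ≠ 0) (hgc : gc ≠ 0) :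
    norm2 (fun i => f i / fc - g i / gc) ≤
      (norm2 (Fin.snoc f fc : Fin (n + 1) → ℝ) * norm2 (Fin.snoc g gc : Fin (n + 1) → ℝ) /
        (|fc| * |gc|)) *
      norm2 (fun i : Fin (n + 1) =>
        (Fin.snoc f fc : Fin (n + 1) → ℝ) i / norm2 (Fin.snoc f fc : Fin (n + 1) → ℝ) -
        (Fin.snoc g gc : Fin (n + 1) → ℝ) i / norm2 (Fin.snoc g gc : Fin (n + 1) → ℝ)) := by
  set F : Fin (n + 1) → ℝ := Fin.snoc f fc
  set G : Fin (n + 1) → ℝ := Fin.snoc g gc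
  have hlhs : norm2 (fun i => f i / fc - g i / gc) = norm2 (fun i => F i / fc - G i / gc) := by
    rw [norm2_eq_norm2_comp_castSucc (x := fun i => F i / fc - G i / gc)
      (by simp [F, G, hfc, hgc])]
    simp [F, G, Function.comp_def]
  have hFe := inner_toLp_snoc_single_last f fc
  have hGe := inner_toLp_snoc_single_last g gc
  have key := norm_inv_inner_smul_sub_inv_inner_smul_le (hFe ▸ hfc) (hGe ▸ hgc)
    (e := EuclideanSpace.single (Fin.last n) (1 : ℝ)) (by simp)
  rw [hFe, hGe] at key
  rw [hlhs, norm2_div_sub_div, norm2_div_sub_div, norm2_eq_norm_toLp F, norm2_eq_norm_toLp G]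
  exact key
end

section
/- Let x ∈ ℝ^N, let s ≥ 1, and let T ⊆ {1,…,N} be an index set of t largest absolute entries of x. If x is effectively s-sparse, i.e. ‖x‖₁ ≤ √s ‖x‖₂, then ‖x restricted to the complement of T‖₂² ≤ (s/(4t)) ‖x‖₂². -/
noncomputable def norm1 {ι : Type*} [Fintype ι] (x : ι → ℝ) : ℝ := ∑ i, |x i|

/-- If x is effectively s-sparse and T is a set of t largest-in-absolute-value entries of x,
then ‖x_{T̄}‖₂² ≤ (s/(4t))‖x‖₂². -/
theorem stmt1 (N t : ℕ) (ht : 0 < t) (s : ℝ) (hs : 1 ≤ s) (x : Fin N → ℝ)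
    (T : Finset (Fin N)) (hcard : T.card = t)
    (hlargest : ∀ i ∈ T, ∀ j ∉ T, |x j| ≤ |x i|)
    (heff : norm1 x ≤ Real.sqrt s * norm2 x) :
    norm2 (fun i => if i ∈ T then 0 else x i) ^ 2 ≤ s / (4 * t) * norm2 x ^ 2 := by
  have htpos : (0:ℝ) < t := by exact_mod_cast ht
  have hTne : T.Nonempty := Finset.card_pos.mp (hcard ▸ ht)
  set A := norm1 x with hA
  have hA0 : 0 ≤ A := Finset.sum_nonneg fun i _ => abs_nonneg _
  obtain ⟨i0, hi0, hmin⟩ : ∃ i ∈ T, ∀ j ∈ T, |x i| ≤ |x j| :=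
    T.exists_min_image (fun i => |x i|) hTne
  set m := |x i0| with hm
  have hm0 : 0 ≤ m := abs_nonneg _
  have hout : ∀ j ∉ T, |x j| ≤ m := fun j hj => hlargest i0 hi0 j hj
  have hsplit : ∑ i ∈ Tᶜ, |x i| + ∑ i ∈ T, |x i| = A := Finset.sum_compl_add_sum T _
  have htm : (t:ℝ) * m ≤ ∑ i ∈ T, |x i| := by
    calc (t:ℝ) * m = ∑ _i ∈ T, m := by rw [Finset.sum_const, hcard]; ring
    _ ≤ ∑ i ∈ T, |x i| := Finset.sum_le_sum fun i hi => hmin i hi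
  have htail1 : ∑ i ∈ Tᶜ, |x i| ≤ A - t * m := by linarith
  have htail1nn : 0 ≤ ∑ i ∈ Tᶜ, |x i| := Finset.sum_nonneg fun i _ => abs_nonneg _
  have htail2 : ∑ i ∈ Tᶜ, x i ^ 2 ≤ m * (A - t * m) := by
    calc ∑ i ∈ Tᶜ, x i ^ 2 ≤ ∑ i ∈ Tᶜ, m * |x i| := by
          refine Finset.sum_le_sum fun i hi => ?_
          have h := hout i (Finset.mem_compl.mp hi)
          calc x i ^ 2 = |x i| * |x i| := by rw [← sq_abs]; ring
            _ ≤ m * |x i| := mul_le_mul_of_nonneg_right h (abs_nonneg _)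
      _ = m * ∑ i ∈ Tᶜ, |x i| := by rw [Finset.mul_sum]
      _ ≤ m * (A - t * m) := mul_le_mul_of_nonneg_left htail1 hm0
  have hamgm : m * (A - t * m) ≤ A ^ 2 / (4 * t) := by
    rw [le_div_iff₀ (by linarith)]
    nlinarith [sq_nonneg (A - 2 * t * m)]
  have hn2 : 0 ≤ norm2 x := Real.sqrt_nonneg _
  have hA2 : A ^ 2 ≤ s * norm2 x ^ 2 := by
    have h := mul_self_le_mul_self hA0 heff
    have hsq : Real.sqrt s * Real.sqrt s = s := Real.mul_self_sqrt (by linarith)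
    calc A ^ 2 = A * A := sq A
      _ ≤ (Real.sqrt s * norm2 x) * (Real.sqrt s * norm2 x) := h
      _ = s * norm2 x ^ 2 := by rw [sq]; nlinarith [hsq]
  have hn : norm2 (fun i => if i ∈ T then 0 else x i) ^ 2 = ∑ i ∈ Tᶜ, x i ^ 2 := by
    rw [norm2, Real.sq_sqrt (Finset.sum_nonneg fun i _ => sq_nonneg _)]
    rw [← Finset.sum_compl_add_sum T]
    have h1 : ∑ i ∈ Tᶜ, (if i ∈ T then 0 else x i) ^ 2 = ∑ i ∈ Tᶜ, x i ^ 2 :=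
      Finset.sum_congr rfl fun i hi => by rw [if_neg (Finset.mem_compl.mp hi)]
    have h2 : ∑ i ∈ T, (if i ∈ T then 0 else x i) ^ 2 = 0 :=
      Finset.sum_eq_zero fun i hi => by rw [if_pos hi]; ring
    rw [h1, h2, add_zero]
  rw [hn]
  have hfin : s * norm2 x ^ 2 / (4 * t) = s / (4 * t) * norm2 x ^ 2 := by ring
  calc ∑ i ∈ Tᶜ, x i ^ 2 ≤ A ^ 2 / (4 * t) := le_trans htail2 hamgm
    _ ≤ s * norm2 x ^ 2 / (4 * t) := by
        gcongr
    _ = s / (4 * t) * norm2 x ^ 2 := hfin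
end

section
/- Let x ∈ ℝ^N and let T be an index set of the t largest absolute entries of x, T₁ an index set of the next t largest, T₂ the next t largest, etc. Then for every k ≥ 1, ‖x_{T_k}‖₂ ≤ ‖x_{T_{k-1}}‖₁ / √t, and consequently ∑_{k≥1} ‖x_{T_k}‖₂ ≤ ‖x‖₁ / √t. -/
/-- Restriction of x to an index set T (zero off T). -/
def restr {ι : Type*} [DecidableEq ι] (x : ι → ℝ) (T : Finset ι) : ι → ℝ :=
  fun i => if i ∈ T then x i else 0

open Finset Function

section Restriction

variable {ι : Type*} [Fintype ι] [DecidableEq ι] (x : ι → ℝ)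

theorem norm1_restr (S : Finset ι) : norm1 (restr x S) = ∑ i ∈ S, |x i| := by
  simp only [norm1, restr, apply_ite abs, abs_zero, sum_ite_mem, univ_inter]

theorem norm2_restr (S : Finset ι) : norm2 (restr x S) = √(∑ i ∈ S, x i ^ 2) := by
  simp only [norm2, restr, ite_pow, ne_eq, OfNat.ofNat_ne_zero, not_false_eq_true, zero_pow,
    sum_ite_mem, univ_inter]

theorem norm1_restr_nonneg (S : Finset ι) : 0 ≤ norm1 (restr x S) := by
  rw [norm1_restr]
  positivity

theorem norm2_restr_empty : norm2 (restr x ∅) = 0 := by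
  simp [norm2_restr]

theorem norm2_restr_le_of_abs_le {S : Finset ι} {c : ℝ} (hc : 0 ≤ c)
    (h : ∀ i ∈ S, |x i| ≤ c) : norm2 (restr x S) ≤ √(#S : ℝ) * c := by
  have hsq : ∑ i ∈ S, x i ^ 2 ≤ #S * c ^ 2 := by
    simpa using sum_le_card_nsmul S (x · ^ 2) (c ^ 2) fun i hi ↦ by
      simpa only [sq_abs] using pow_le_pow_left₀ (abs_nonneg _) (h i hi) 2
  calc norm2 (restr x S) ≤ √(#S * c ^ 2) := by rw [norm2_restr]; exact Real.sqrt_le_sqrt hsq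
    _ = √(#S : ℝ) * c := by rw [Real.sqrt_mul (by positivity), Real.sqrt_sq hc]

theorem card_mul_le_norm1_restr {S : Finset ι} {c : ℝ} (h : ∀ i ∈ S, c ≤ |x i|) :
    #S * c ≤ norm1 (restr x S) := by
  simpa [norm1_restr] using card_nsmul_le_sum S (|x ·|) c h

theorem norm2_restr_le_norm1_restr_div_sqrt_card {S T : Finset ι} (hcard : #T ≤ #S)
    (hdom : ∀ i ∈ S, ∀ j ∈ T, |x j| ≤ |x i|) :
    norm2 (restr x T) ≤ norm1 (restr x S) / √(#S : ℝ) := by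
  rcases Nat.eq_zero_or_pos #S with hS | hS
  · rw [card_eq_zero.mp (Nat.le_zero.mp (hS ▸ hcard) : #T = 0), norm2_restr_empty]
    exact div_nonneg (norm1_restr_nonneg x S) (Real.sqrt_nonneg _)
  have hSpos : (0 : ℝ) < #S := by exact_mod_cast hS
  have hmean : ∀ j ∈ T, |x j| ≤ norm1 (restr x S) / #S := fun j hj ↦
    (le_div_iff₀' hSpos).mpr (card_mul_le_norm1_restr x fun i hi ↦ hdom i hi j hj)
  calc norm2 (restr x T) ≤ √(#T : ℝ) * (norm1 (restr x S) / #S) :=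
        norm2_restr_le_of_abs_le x (by positivity [norm1_restr_nonneg x S]) hmean
    _ ≤ √(#S : ℝ) * (norm1 (restr x S) / #S) := by
        gcongr
        exact div_nonneg (norm1_restr_nonneg x S) hSpos.le
    _ = norm1 (restr x S) / √(#S : ℝ) := by
        field_simp
        rw [Real.sq_sqrt hSpos.le, mul_comm]

variable {κ : Type*} {T : κ → Finset ι}

theorem sum_norm1_restr_le (hdisj : Pairwise (Disjoint on T)) (s : Finset κ) :
    ∑ k ∈ s, norm1 (restr x (T k)) ≤ norm1 x := by
  simp only [norm1_restr]
  rw [← sum_biUnion (hdisj.set_pairwise _)]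
  exact sum_le_univ_sum_of_nonneg fun i ↦ abs_nonneg (x i)

theorem summable_norm1_restr (hdisj : Pairwise (Disjoint on T)) :
    Summable fun k ↦ norm1 (restr x (T k)) :=
  summable_of_sum_le (fun k ↦ norm1_restr_nonneg x (T k)) (sum_norm1_restr_le x hdisj)

theorem tsum_norm1_restr_le (hdisj : Pairwise (Disjoint on T)) :
    ∑' k, norm1 (restr x (T k)) ≤ norm1 x :=
  Real.tsum_le_of_sum_le (fun k ↦ norm1_restr_nonneg x (T k)) (sum_norm1_restr_le x hdisj)

end Restriction

theorem stmt2_general (N t : ℕ) (x : Fin N → ℝ) (T : ℕ → Finset (Fin N))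
    (hdisj : ∀ k l, k ≠ l → Disjoint (T k) (T l))
    (hcard_le : ∀ k, (T k).card ≤ t)
    (hcard_full : ∀ k, (T (k + 1)).Nonempty → (T k).card = t)
    (hdecr : ∀ k, ∀ i ∈ T k, ∀ j ∈ T (k + 1), |x j| ≤ |x i|) :
    (∀ k : ℕ, norm2 (restr x (T (k + 1))) ≤ norm1 (restr x (T k)) / Real.sqrt t) ∧
    (∑' k : ℕ, norm2 (restr x (T (k + 1)))) ≤ norm1 x / Real.sqrt t := by
  have hblock : ∀ k : ℕ, norm2 (restr x (T (k + 1))) ≤ norm1 (restr x (T k)) / √t := by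
    intro k
    rcases (T (k + 1)).eq_empty_or_nonempty with hempty | hne
    · rw [hempty, norm2_restr_empty]
      exact div_nonneg (norm1_restr_nonneg x _) (Real.sqrt_nonneg _)
    · have hcard := hcard_full k hne
      simpa [hcard] using norm2_restr_le_norm1_restr_div_sqrt_card x
        (hcard ▸ hcard_le (k + 1)) (hdecr k)
  refine ⟨hblock, ?_⟩
  have hdisj' : Pairwise (Disjoint on T) := fun k l hkl ↦ hdisj k l hkl
  have hsummable := (summable_norm1_restr x hdisj').div_const √t
  calc ∑' k, norm2 (restr x (T (k + 1))) ≤ ∑' k, norm1 (restr x (T k)) / √t :=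
        (hsummable.of_nonneg_of_le (fun _ ↦ Real.sqrt_nonneg _) hblock).tsum_le_tsum
          hblock hsummable
    _ = (∑' k, norm1 (restr x (T k))) / √t := tsum_div_const
    _ ≤ norm1 x / √t := by gcongr; exact tsum_norm1_restr_le x hdisj'

/-- Block decomposition bound: if T₀, T₁, T₂, … partition the indices into blocks of
decreasing magnitudes, with |T_{k-1}| = t whenever T_k is nonempty, then
‖x_{T_k}‖₂ ≤ ‖x_{T_{k-1}}‖₁/√t for all k ≥ 1, and ∑_{k≥1} ‖x_{T_k}‖₂ ≤ ‖x‖₁/√t. -/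
theorem stmt2 (N t : ℕ) (ht : 0 < t) (x : Fin N → ℝ) (T : ℕ → Finset (Fin N))
    (hdisj : ∀ k l, k ≠ l → Disjoint (T k) (T l))
    (hunion : ∀ i : Fin N, ∃ k, i ∈ T k)
    (hcard_le : ∀ k, (T k).card ≤ t)
    (hcard_full : ∀ k, (T (k + 1)).Nonempty → (T k).card = t)
    (hdecr : ∀ k, ∀ i ∈ T k, ∀ j ∈ T (k + 1), |x j| ≤ |x i|) :
    (∀ k : ℕ, norm2 (restr x (T (k + 1))) ≤ norm1 (restr x (T k)) / Real.sqrt t) ∧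
    (∑' k : ℕ, norm2 (restr x (T (k + 1)))) ≤ norm1 x / Real.sqrt t :=
  stmt2_general N t x T hdisj hcard_le hcard_full hdecr
end

section
/- Let D ∈ ℝ^{n×N} be a tight frame (DD* = I_n) and let f ∈ ℝ^n be effectively s-analysis-sparse, i.e. ‖D*f‖₁ ≤ √s ‖D*f‖₂. Let T₀ be an index set of t largest absolute entries of D*f, with t > s. Then ‖D((D*f)_{T₀})‖₂ ≥ ((1 − √(s/t))/√s) ‖D*f‖₁. -/
lemma norm2_nonneg {ι : Type*} [Fintype ι] (x : ι → ℝ) : 0 ≤ norm2 x :=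
  Real.sqrt_nonneg _

lemma norm2_sq {ι : Type*} [Fintype ι] (x : ι → ℝ) : norm2 x ^ 2 = ∑ i, x i ^ 2 := by
  rw [norm2, Real.sq_sqrt (Finset.sum_nonneg fun i _ => sq_nonneg _)]

lemma norm2_triangle {ι : Type*} [Fintype ι] (x y : ι → ℝ) :
    norm2 (x + y) ≤ norm2 x + norm2 y := by
  have h := norm_add_le ((EuclideanSpace.equiv ι ℝ).symm x) ((EuclideanSpace.equiv ι ℝ).symm y)
  simp only [EuclideanSpace.norm_eq] at h
  simpa [norm2, Real.norm_eq_abs, sq_abs] using h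

lemma cauchy {ι : Type*} [Fintype ι] (x y : ι → ℝ) :
    ∑ i, x i * y i ≤ norm2 x * norm2 y := by
  have h := Finset.sum_mul_sq_le_sq_mul_sq Finset.univ x y
  have h2 : (∑ i, x i * y i) ^ 2 ≤ (norm2 x * norm2 y) ^ 2 := by
    rw [mul_pow, norm2_sq, norm2_sq]; exact h
  calc ∑ i, x i * y i ≤ |∑ i, x i * y i| := le_abs_self _
    _ = Real.sqrt ((∑ i, x i * y i)^2) := (Real.sqrt_sq_eq_abs _).symm
    _ ≤ Real.sqrt ((norm2 x * norm2 y)^2) := Real.sqrt_le_sqrt h2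
    _ = norm2 x * norm2 y := Real.sqrt_sq (mul_nonneg (norm2_nonneg _) (norm2_nonneg _))

open Matrix in
theorem opnorm (n N : ℕ) (D : Matrix (Fin n) (Fin N) ℝ) (hD : D * D.transpose = 1)
    (x : Fin N → ℝ) : norm2 (D.mulVec x) ≤ norm2 x := by
  set P : Fin N → ℝ := D.transpose.mulVec (D.mulVec x) with hP
  have hsym : (D.transpose * D).transpose = D.transpose * D := by
    simp [Matrix.transpose_mul]
  have hid : ∑ i, (D.mulVec x) i ^ 2 = ∑ i, P i * x i := by
    have : (D.mulVec x) ⬝ᵥ (D.mulVec x) = P ⬝ᵥ x := by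
      rw [hP, Matrix.dotProduct_mulVec, Matrix.mulVec_transpose]
    simpa [dotProduct, sq] using this
  have hPP : ∑ i, P i ^ 2 = ∑ i, P i * x i := by
    have h1 : P ⬝ᵥ P = P ⬝ᵥ x := by
      have hPeq : P = (D.transpose * D).mulVec x := by rw [hP, Matrix.mulVec_mulVec]
      conv_lhs => rw [show (P ⬝ᵥ P) = P ⬝ᵥ ((Dᵀ * D) *ᵥ x) from by rw [← hPeq]]
      rw [Matrix.dotProduct_mulVec, ← Matrix.mulVec_transpose, hsym, hPeq,
        Matrix.mulVec_mulVec, show Dᵀ * D * (Dᵀ * D) = Dᵀ * D from by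
          rw [Matrix.mul_assoc, ← Matrix.mul_assoc D, hD, Matrix.one_mul]]
    simpa [dotProduct, sq] using h1
  have hcs : ∑ i, P i * x i ≤ norm2 P * norm2 x := cauchy P x
  have hDx : norm2 (D.mulVec x) ^ 2 = norm2 P ^ 2 := by
    rw [norm2_sq, norm2_sq, hid, ← hPP]
  have hPx : norm2 (D.mulVec x) = norm2 P := by
    rw [← Real.sqrt_sq (norm2_nonneg (D.mulVec x)), hDx, Real.sqrt_sq (norm2_nonneg P)]
  rw [hPx]
  by_cases h0 : norm2 P = 0
  · rw [h0]; exact norm2_nonneg x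
  · have hpos : 0 < norm2 P := lt_of_le_of_ne (norm2_nonneg P) (Ne.symm h0)
    have : norm2 P ^ 2 ≤ norm2 P * norm2 x := by rw [norm2_sq, hPP]; exact hcs
    nlinarith

lemma norm1_nonneg {ι : Type*} [Fintype ι] (x : ι → ℝ) : 0 ≤ norm1 x :=
  Finset.sum_nonneg fun i _ => abs_nonneg _

open Matrix in
/-- For a tight frame D and an effectively s-analysis-sparse signal f, with T₀ an index set of the
t largest absolute entries of D*f (t > s), one has
‖D((D*f)_{T₀})‖₂ ≥ ((1 − √(s/t))/√s)‖D*f‖₁. -/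
theorem stmt3 (n N t : ℕ) (s : ℝ) (hs : 0 < s) (hts : s < t)
    (D : Matrix (Fin n) (Fin N) ℝ) (hD : D * D.transpose = 1)
    (f : Fin n → ℝ)
    (heff : norm1 (D.transpose.mulVec f) ≤ Real.sqrt s * norm2 (D.transpose.mulVec f))
    (T₀ : Finset (Fin N)) (hcard : T₀.card = t)
    (hlargest : ∀ i ∈ T₀, ∀ j ∉ T₀, |D.transpose.mulVec f j| ≤ |D.transpose.mulVec f i|) :
    (1 - Real.sqrt (s / t)) / Real.sqrt s * norm1 (D.transpose.mulVec f) ≤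
      norm2 (D.mulVec (restr (D.transpose.mulVec f) T₀)) := by
  set g : Fin N → ℝ := D.transpose.mulVec f with hg
  have htpos : (0:ℝ) < t := lt_trans hs hts
  have hDg : D.mulVec g = f := by
    rw [hg, Matrix.mulVec_mulVec, hD, Matrix.one_mulVec]
  -- norm2 g = norm2 f
  have hgg : g ⬝ᵥ g = f ⬝ᵥ f := by
    conv_lhs => rw [show g ⬝ᵥ g = g ⬝ᵥ (Dᵀ *ᵥ f) from rfl]
    rw [Matrix.dotProduct_mulVec, Matrix.vecMul_transpose, hDg]
  have hnorm : norm2 g = norm2 f := by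
    unfold norm2
    congr 1
    simpa [dotProduct, sq] using hgg
  -- split
  have hsplit : restr g T₀ + restr g T₀ᶜ = g := by
    funext i
    by_cases h : i ∈ T₀ <;> simp [restr, h]
  -- tail bound
  have hptw : ∀ j ∉ T₀, (t:ℝ) * |g j| ≤ norm1 g := by
    intro j hj
    calc (t:ℝ) * |g j| = ∑ _i ∈ T₀, |g j| := by rw [Finset.sum_const, hcard]; ring
      _ ≤ ∑ i ∈ T₀, |g i| := Finset.sum_le_sum fun i hi => hlargest i hi j hj
      _ ≤ norm1 g := Finset.sum_le_sum_of_subset_of_nonneg (Finset.subset_univ T₀)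
          (fun i _ _ => abs_nonneg _)
  have habs_le : ∀ j, |restr g T₀ᶜ j| ≤ |g j| := by
    intro j; by_cases h : j ∈ T₀ᶜ <;> simp [restr, h, abs_nonneg]
  have hsum_abs : ∑ j, |restr g T₀ᶜ j| ≤ norm1 g :=
    Finset.sum_le_sum fun j _ => habs_le j
  have hM : ∀ j, |restr g T₀ᶜ j| ≤ norm1 g / t := by
    intro j
    by_cases h : j ∈ T₀
    · simp only [restr, Finset.mem_compl, h, not_true_eq_false, if_false, abs_zero]
      exact div_nonneg (norm1_nonneg g) htpos.le
    · have h1 := hptw j h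
      have h2 : |restr g T₀ᶜ j| = |g j| := by simp [restr, h]
      rw [h2, le_div_iff₀ htpos]
      linarith [h1, mul_comm (|g j|) (t:ℝ)]
  have hC : norm2 (restr g T₀ᶜ) ≤ norm1 g / Real.sqrt t := by
    have hsq : ∑ j, (restr g T₀ᶜ j) ^ 2 ≤ norm1 g ^ 2 / t := by
      calc ∑ j, (restr g T₀ᶜ j) ^ 2 = ∑ j, |restr g T₀ᶜ j| * |restr g T₀ᶜ j| := by
            simp [sq, abs_mul_abs_self]
        _ ≤ ∑ j, (norm1 g / t) * |restr g T₀ᶜ j| :=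
            Finset.sum_le_sum fun j _ => mul_le_mul_of_nonneg_right (hM j) (abs_nonneg _)
        _ = (norm1 g / t) * ∑ j, |restr g T₀ᶜ j| := by rw [Finset.mul_sum]
        _ ≤ (norm1 g / t) * norm1 g := by
            exact mul_le_mul_of_nonneg_left hsum_abs
              (div_nonneg (norm1_nonneg g) htpos.le)
        _ = norm1 g ^ 2 / t := by ring
    calc norm2 (restr g T₀ᶜ) ≤ Real.sqrt (norm1 g ^ 2 / t) := Real.sqrt_le_sqrt hsq
      _ = norm1 g / Real.sqrt t := by
          rw [Real.sqrt_div (sq_nonneg _), Real.sqrt_sq (norm1_nonneg g)]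
  -- triangle
  have htri : norm2 f ≤ norm2 (D.mulVec (restr g T₀)) + norm2 (restr g T₀ᶜ) := by
    calc norm2 f = norm2 (D.mulVec (restr g T₀) + D.mulVec (restr g T₀ᶜ)) := by
          rw [← Matrix.mulVec_add, hsplit, hDg]
      _ ≤ norm2 (D.mulVec (restr g T₀)) + norm2 (D.mulVec (restr g T₀ᶜ)) :=
          norm2_triangle _ _
      _ ≤ norm2 (D.mulVec (restr g T₀)) + norm2 (restr g T₀ᶜ) := by
          have := opnorm n N D hD (restr g T₀ᶜ)
          linarith
  have hss : (0:ℝ) < Real.sqrt s := Real.sqrt_pos.2 hs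
  have htt : (0:ℝ) < Real.sqrt t := Real.sqrt_pos.2 htpos
  have heff' : norm1 g / Real.sqrt s ≤ norm2 g := by
    rw [div_le_iff₀ hss]; linarith [heff]
  have hrw : (1 - Real.sqrt (s / t)) / Real.sqrt s * norm1 g
      = norm1 g / Real.sqrt s - norm1 g / Real.sqrt t := by
    rw [Real.sqrt_div hs.le]
    field_simp
  rw [hrw]
  linarith [htri, hC, heff', hnorm]
end

section
/- Let D ∈ ℝ^{n×N} be a tight frame and A ∈ ℝ^{m×n}. Suppose A satisfies D-SPEP(2s, δ/2): |⟨A'f, sgn(A'g)⟩ − ⟨f, g⟩| ≤ δ/2 for all f, g ∈ D(Σ_{2s}^N) ∩ S^{n−1}, where A' = (√(2/π)/m)A. Then for all g, h ∈ D(Σ_s^N) ∩ S^{n−1} with sgn(Ag) = sgn(Ah) (componentwise), one has ‖g − h‖₂ ≤ δ. -/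
/-- D-SPEP(2s, δ/2) implies δ-tessellation of the synthesis-sparse sphere:
if g, h ∈ D(Σ_s) ∩ S^{n−1} have the same one-bit measurements sgn(Ag) = sgn(Ah),
then ‖g − h‖₂ ≤ δ. -/
theorem stmt15 (m n N s : ℕ) (δ : ℝ)
    (D : Matrix (Fin n) (Fin N) ℝ) (hD : D * D.transpose = 1)
    (A : Matrix (Fin m) (Fin n) ℝ)
    (hSPEP : ∀ f g : Fin n → ℝ,
      (∃ x : Fin N → ℝ, (Finset.univ.filter fun j => x j ≠ 0).card ≤ 2 * s ∧ f = D.mulVec x) →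
      norm2 f = 1 →
      (∃ x : Fin N → ℝ, (Finset.univ.filter fun j => x j ≠ 0).card ≤ 2 * s ∧ g = D.mulVec x) →
      norm2 g = 1 →
      |(∑ i, ((Real.sqrt (2 / Real.pi) / m) • A).mulVec f i *
          Real.sign (((Real.sqrt (2 / Real.pi) / m) • A).mulVec g i)) - ∑ j, f j * g j| ≤ δ / 2)
    (g h : Fin n → ℝ)
    (hg : ∃ x : Fin N → ℝ, (Finset.univ.filter fun j => x j ≠ 0).card ≤ s ∧ g = D.mulVec x)
    (hh : ∃ x : Fin N → ℝ, (Finset.univ.filter fun j => x j ≠ 0).card ≤ s ∧ h = D.mulVec x)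
    (hgn : norm2 g = 1) (hhn : norm2 h = 1)
    (hsgn : ∀ i, Real.sign (A.mulVec g i) = Real.sign (A.mulVec h i)) :
    norm2 (fun i => g i - h i) ≤ δ := by
  obtain ⟨x, hxs, hgx⟩ := hg
  obtain ⟨y, hys, hhy⟩ := hh
  set c : ℝ := Real.sqrt (2 / Real.pi) / m with hc
  have hc0 : 0 ≤ c := div_nonneg (Real.sqrt_nonneg _) (Nat.cast_nonneg m)
  have hg2 : ∃ x : Fin N → ℝ,
      (Finset.univ.filter fun j => x j ≠ 0).card ≤ 2 * s ∧ g = D.mulVec x :=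
    ⟨x, le_trans hxs (by omega), hgx⟩
  have hh2 : ∃ x : Fin N → ℝ,
      (Finset.univ.filter fun j => x j ≠ 0).card ≤ 2 * s ∧ h = D.mulVec x :=
    ⟨y, le_trans hys (by omega), hhy⟩
  have hδ : 0 ≤ δ := by
    have h1 := hSPEP g g hg2 hgn hg2 hgn
    have h2 := (abs_nonneg _).trans h1
    linarith
  -- signs of the scaled measurements agree
  have hsignc : ∀ i, Real.sign ((c • A).mulVec g i) = Real.sign ((c • A).mulVec h i) := by
    intro i
    have e : ∀ v : Fin n → ℝ, (c • A).mulVec v i = c * A.mulVec v i := by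
      intro v; rw [Matrix.smul_mulVec]; rfl
    rw [e, e]
    rcases hc0.lt_or_eq with hpos | hzero
    · have sgm : ∀ u : ℝ, Real.sign (c * u) = Real.sign u := by
        intro u
        rcases lt_trichotomy u 0 with hu | hu | hu
        · rw [Real.sign_of_neg hu, Real.sign_of_neg (mul_neg_of_pos_of_neg hpos hu)]
        · simp [hu]
        · rw [Real.sign_of_pos hu, Real.sign_of_pos (mul_pos hpos hu)]
      rw [sgm, sgm, hsgn i]
    · simp [← hzero]
  set S : ℝ := ∑ i, (g i - h i) ^ 2 with hS
  have hS0 : 0 ≤ S := Finset.sum_nonneg fun i _ => sq_nonneg _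
  have hgoal : norm2 (fun i => g i - h i) = Real.sqrt S := rfl
  rcases hS0.lt_or_eq with hSpos | hSzero
  · set t : ℝ := Real.sqrt S with ht
    have ht0 : 0 < t := Real.sqrt_pos.mpr hSpos
    have ht2 : t ^ 2 = S := Real.sq_sqrt hS0
    set f : Fin n → ℝ := fun i => t⁻¹ * (g i - h i) with hf
    have hfD : f = D.mulVec (t⁻¹ • (x - y)) := by
      funext i
      simp [hf, hgx, hhy, Matrix.mulVec_smul, Matrix.mulVec_sub]
    have hfcard : (Finset.univ.filter fun j => (t⁻¹ • (x - y)) j ≠ 0).card ≤ 2 * s := by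
      refine le_trans (Finset.card_le_card (fun j hj => ?_))
        (le_trans (Finset.card_union_le
          (Finset.univ.filter fun j => x j ≠ 0)
          (Finset.univ.filter fun j => y j ≠ 0)) (by omega))
      simp only [Finset.mem_filter, Finset.mem_union, Finset.mem_univ, true_and,
        Pi.smul_apply, Pi.sub_apply, smul_eq_mul] at hj ⊢
      by_contra hcon
      push_neg at hcon
      simp [hcon.1, hcon.2] at hj
    have hfn : norm2 f = 1 := by
      have : ∑ i, f i ^ 2 = 1 := by
        simp only [hf, mul_pow]
        rw [← Finset.mul_sum, ← hS]
        field_simp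
        rw [ht2]
      rw [norm2, this, Real.sqrt_one]
    have hfg := hSPEP f g ⟨t⁻¹ • (x - y), hfcard, hfD⟩ hfn hg2 hgn
    have hfh := hSPEP f h ⟨t⁻¹ • (x - y), hfcard, hfD⟩ hfn hh2 hhn
    have hsumeq : (∑ i, (c • A).mulVec f i * Real.sign ((c • A).mulVec h i))
        = ∑ i, (c • A).mulVec f i * Real.sign ((c • A).mulVec g i) :=
      Finset.sum_congr rfl fun i _ => by rw [hsignc i]
    rw [hsumeq] at hfh
    have hdiff : (∑ j, f j * g j) - (∑ j, f j * h j) = t := by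
      rw [← Finset.sum_sub_distrib]
      have : ∀ j, f j * g j - f j * h j = t⁻¹ * (g j - h j) ^ 2 := by
        intro j; simp only [hf]; ring
      rw [Finset.sum_congr rfl fun j _ => this j, ← Finset.mul_sum, ← hS, ← ht2]
      field_simp
    rw [abs_le] at hfg hfh
    rw [hgoal]
    linarith [hfg.1, hfg.2, hfh.1, hfh.2]
  · rw [hgoal, ← hSzero, Real.sqrt_zero]
    exact hδ
end
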